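/- arXiv:1504.06568 — 5 statements merged into one kernel-verified Lean document; each statement's English description precedes it below -/
import Mathlib

section
/- Let A be a commutative ring (integral domain, finitely generated over an algebraically closed field k) and let S be a finite set of valuations on A that is irredundant: for each v ∈ S there exists f ∈ A with v(f) < v'(f) for all v' ∈ S \ {v}. Then S is uniquely determined by the function h_S(f) := min_{v∈S} v(f). That is, if S and T are two irredundant finite sets of valuations with h_S = h_T, then S = T. -/
open Classical Filter

def IsValuationOn (k : Type*) [Field k] (A : Type*) [CommRing A] [Algebra k A]
    (v : A → WithTop ℝ) : Prop :=
  (∀ f g : A, v (f * g) = v f + v g) ∧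
  (∀ f g : A, min (v f) (v g) ≤ v (f + g)) ∧
  (∀ c : k, c ≠ 0 → v (algebraMap k A c) = 0) ∧
  v 0 = ⊤

section Aux
variable {k : Type*} [Field k] {A : Type*} [CommRing A] [Algebra k A]

lemma val_one {v : A → WithTop ℝ} (hv : IsValuationOn k A v) : v 1 = 0 := by
  have := hv.2.2.1 1 one_ne_zero
  simpa using this

lemma val_pow {v : A → WithTop ℝ} (hv : IsValuationOn k A v) (f : A) (n : ℕ) :
    v (f ^ n) = n • v f := by
  induction n with
  | zero => simpa using val_one hv
  | succ m ih => rw [pow_succ, hv.1, ih, succ_nsmul]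

lemma nsmul_ne_top' {x : WithTop ℝ} (hx : x ≠ ⊤) (n : ℕ) : n • x ≠ ⊤ := by
  lift x to ℝ using hx
  rw [← WithTop.coe_nsmul]
  exact WithTop.coe_ne_top

lemma nsmul_top_eq {n : ℕ} (hn : 1 ≤ n) : n • (⊤ : WithTop ℝ) = ⊤ := by
  obtain ⟨m, rfl⟩ := Nat.exists_eq_add_of_le hn
  rw [add_comm, succ_nsmul, add_top]

lemma add_lt_add_wt {a b c d : WithTop ℝ} (ha : a ≠ ⊤) (hc : c ≠ ⊤)
    (hab : a < b) (hcd : c ≤ d) : a + c < b + d := by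
  lift a to ℝ using ha
  lift c to ℝ using hc
  rcases eq_or_ne b ⊤ with rfl | hb
  · rw [top_add]
    exact_mod_cast WithTop.coe_lt_top _
  rcases eq_or_ne d ⊤ with rfl | hd
  · rw [add_top]
    exact_mod_cast WithTop.coe_lt_top _
  lift b to ℝ using hb
  lift d to ℝ using hd
  rw [← WithTop.coe_add, ← WithTop.coe_add, WithTop.coe_lt_coe]
  have h1 : a < b := by exact_mod_cast hab
  have h2 : c ≤ d := by exact_mod_cast hcd
  linarith

lemma eventually_nsmul_lt {a b c d : WithTop ℝ} (hab : a < b) (ha : a ≠ ⊤) (hc : c ≠ ⊤) :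
    ∀ᶠ n : ℕ in atTop, n • a + c < n • b + d := by
  lift a to ℝ using ha
  lift c to ℝ using hc
  rcases eq_or_ne b ⊤ with rfl | hb
  · filter_upwards [eventually_ge_atTop 1] with n hn
    rw [nsmul_top_eq hn, top_add, ← WithTop.coe_nsmul, ← WithTop.coe_add]
    exact WithTop.coe_lt_top _
  lift b to ℝ using hb
  rcases eq_or_ne d ⊤ with rfl | hd
  · refine Eventually.of_forall fun n => ?_
    rw [add_top, ← WithTop.coe_nsmul, ← WithTop.coe_add]
    exact WithTop.coe_lt_top _
  lift d to ℝ using hd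
  have hba : (0:ℝ) < b - a := by
    have : a < b := by exact_mod_cast hab
    linarith
  obtain ⟨N, hN⟩ := exists_nat_gt ((c - d) / (b - a))
  filter_upwards [eventually_ge_atTop N] with n hn
  rw [← WithTop.coe_nsmul, ← WithTop.coe_nsmul, ← WithTop.coe_add, ← WithTop.coe_add,
    WithTop.coe_lt_coe]
  have hn' : (c - d) / (b - a) < (n : ℝ) := lt_of_lt_of_le hN (by exact_mod_cast hn)
  have := (div_lt_iff₀ hba).1 hn'
  simp only [nsmul_eq_mul]
  nlinarith

lemma inf_eq_on_mul {S : Finset (A → WithTop ℝ)} (hSval : ∀ v ∈ S, IsValuationOn k A v)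
    {v : A → WithTop ℝ} (hv : v ∈ S) {f g : A}
    (hf : S.inf (fun u => u f) = v f) (hg : S.inf (fun u => u g) = v g) :
    S.inf (fun u => u (f * g)) = v (f * g) := by
  refine le_antisymm (Finset.inf_le hv) (Finset.le_inf fun u hu => ?_)
  rw [(hSval v hv).1, (hSval u hu).1]
  exact add_le_add (le_trans (le_of_eq hf.symm) (Finset.inf_le hu))
    (le_trans (le_of_eq hg.symm) (Finset.inf_le hu))

lemma inf_eq_on_prod {S : Finset (A → WithTop ℝ)} (hSval : ∀ v ∈ S, IsValuationOn k A v)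
    {v : A → WithTop ℝ} (hv : v ∈ S) {ι : Type*} (s : Finset ι) (F : ι → A)
    (hF : ∀ i ∈ s, S.inf (fun u => u (F i)) = v (F i)) :
    S.inf (fun u => u (∏ i ∈ s, F i)) = v (∏ i ∈ s, F i) := by
  classical
  induction s using Finset.induction with
  | empty =>
      simp only [Finset.prod_empty]
      refine le_antisymm (Finset.inf_le hv) (Finset.le_inf fun u hu => ?_)
      rw [val_one (hSval v hv), val_one (hSval u hu)]
  | @insert i s his ih =>
      rw [Finset.prod_insert his]
      exact inf_eq_on_mul hSval hv (hF i (Finset.mem_insert_self i s))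
        (ih fun j hj => hF j (Finset.mem_insert_of_mem hj))

lemma val_prod_ne_top {v : A → WithTop ℝ} (hv : IsValuationOn k A v)
    {ι : Type*} (s : Finset ι) (F : ι → A) (h : ∀ i ∈ s, v (F i) ≠ ⊤) :
    v (∏ i ∈ s, F i) ≠ ⊤ := by
  classical
  induction s using Finset.induction with
  | empty => simp [val_one hv]
  | @insert i s his ih =>
      rw [Finset.prod_insert his, hv.1]
      exact WithTop.add_ne_top.2 ⟨h i (Finset.mem_insert_self i s),
        ih fun j hj => h j (Finset.mem_insert_of_mem hj)⟩

lemma subset_of_inf_eq {S T : Finset (A → WithTop ℝ)}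
    (hSval : ∀ v ∈ S, IsValuationOn k A v) (hTval : ∀ v ∈ T, IsValuationOn k A v)
    (hSirr : ∀ v ∈ S, ∃ f : A, ∀ v' ∈ S, v' ≠ v → v f < v' f)
    (hmin : ∀ f : A, S.inf (fun v => v f) = T.inf (fun v => v f)) :
    S ⊆ T := by
  intro v hv
  have hvval := hSval v hv
  have hTle : ∀ w ∈ T, ∀ g : A, S.inf (fun u => u g) ≤ w g :=
    fun w hw g => le_trans (le_of_eq (hmin g)) (Finset.inf_le hw)
  have hTne : T.Nonempty := by
    by_contra hTe
    rw [Finset.not_nonempty_iff_eq_empty] at hTe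
    have h1 : S.inf (fun u => u (1:A)) ≤ v 1 := Finset.inf_le hv
    rw [val_one hvval, hmin 1, hTe] at h1
    simp at h1
  have key : ∃ w ∈ T, ∀ g : A, S.inf (fun u => u g) = v g → S.inf (fun u => u g) = w g := by
    by_contra hcon
    push_neg at hcon
    choose G hG1 hG2 using hcon
    set P : A := ∏ x ∈ T.attach, G x.1 x.2 with hPdef
    have hPC : S.inf (fun u => u P) = v P :=
      inf_eq_on_prod hSval hv T.attach _ (fun x _ => hG1 x.1 x.2)
    obtain ⟨w0, hw0, hw0inf⟩ := Finset.exists_mem_eq_inf T hTne (fun u => u P)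
    have hvP : v P = w0 P := hPC.symm.trans ((hmin P).trans hw0inf)
    have hfin : ∀ x : {y // y ∈ T}, v (G x.1 x.2) ≠ ⊤ := by
      intro x h
      have h1 : S.inf (fun u => u (G x.1 x.2)) = ⊤ := (hG1 x.1 x.2).trans h
      have h2 := hTle x.1 x.2 (G x.1 x.2)
      rw [h1] at h2
      exact hG2 x.1 x.2 (h1.trans (top_le_iff.1 h2).symm)
    set x0 : {y // y ∈ T} := ⟨w0, hw0⟩ with hx0
    set Q : A := ∏ x ∈ (T.attach).erase x0, G x.1 x.2 with hQdef
    have hPdecomp : P = G w0 hw0 * Q :=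
      (Finset.mul_prod_erase T.attach _ (Finset.mem_attach T x0)).symm
    have hQ : S.inf (fun u => u Q) = v Q :=
      inf_eq_on_prod hSval hv _ _ (fun x _ => hG1 x.1 x.2)
    have hQfin : v Q ≠ ⊤ := val_prod_ne_top hvval _ _ (fun x _ => hfin x)
    have hQle : v Q ≤ w0 Q := le_trans (le_of_eq hQ.symm) (hTle w0 hw0 Q)
    have hlt : v (G w0 hw0) < w0 (G w0 hw0) :=
      lt_of_le_of_ne (le_trans (le_of_eq (hG1 w0 hw0).symm) (hTle w0 hw0 _))
        (fun h => hG2 w0 hw0 ((hG1 w0 hw0).trans h))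
    have hafin : v (G w0 hw0) ≠ ⊤ := hfin x0
    have hstrict : v P < w0 P := by
      rw [hPdecomp, hvval.1, (hTval w0 hw0).1]
      exact add_lt_add_wt hafin hQfin hlt hQle
    exact absurd hvP hstrict.ne
  obtain ⟨w, hw, hCD⟩ := key
  suffices hvw : v = w by rwa [hvw]
  by_cases hS1 : ∀ v' ∈ S, v' = v
  · funext g
    have hallg : S.inf (fun u => u g) = v g :=
      le_antisymm (Finset.inf_le hv) (Finset.le_inf fun u hu => le_of_eq (by rw [hS1 u hu]))
    exact hallg.symm.trans (hCD g hallg)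
  · push_neg at hS1
    obtain ⟨v0, hv0, hne0⟩ := hS1
    obtain ⟨f, hf⟩ := hSirr v hv
    have hvf : v f ≠ ⊤ := (lt_of_lt_of_le (hf v0 hv0 hne0) le_top).ne
    have hfC : S.inf (fun u => u f) = v f := by
      refine le_antisymm (Finset.inf_le hv) (Finset.le_inf fun u hu => ?_)
      by_cases h : u = v
      · subst h; exact le_refl _
      · exact (hf u hu h).le
    have hwf : w f = v f := (hCD f hfC).symm.trans hfC
    funext g
    by_cases hg : v g = ⊤
    · -- show v g = w g with v g = ⊤
      suffices hwg' : w g = ⊤ by rw [hg, hwg']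
      by_contra hwg
      have hev : ∀ᶠ n : ℕ in atTop, ∀ u ∈ S, n • v f + w g < n • u f + u g := by
        rw [eventually_all_finset]
        intro u hu
        by_cases huv : u = v
        · subst huv
          refine Eventually.of_forall fun n => ?_
          rw [hg, add_top]
          exact lt_top_iff_ne_top.2 (WithTop.add_ne_top.2 ⟨nsmul_ne_top' hvf n, hwg⟩)
        · exact eventually_nsmul_lt (hf u hu huv) hvf hwg
      obtain ⟨n, hn⟩ := hev.exists
      have hb : (n • v f + w g) < ⊤ :=
        lt_top_iff_ne_top.2 (WithTop.add_ne_top.2 ⟨nsmul_ne_top' hvf n, hwg⟩)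
      have h1 : n • v f + w g < S.inf (fun u => u (f ^ n * g)) := by
        rw [Finset.lt_inf_iff hb]
        intro u hu
        rw [(hSval u hu).1, val_pow (hSval u hu)]
        exact hn u hu
      have h2 : S.inf (fun u => u (f ^ n * g)) ≤ n • v f + w g := by
        have := hTle w hw (f ^ n * g)
        rwa [(hTval w hw).1, val_pow (hTval w hw), hwf] at this
      exact absurd (h1.trans_le h2) (lt_irrefl _)
    · -- v g ≠ ⊤
      have hev : ∀ᶠ n : ℕ in atTop, ∀ u ∈ S, u ≠ v → n • v f + v g < n • u f + u g := by
        rw [eventually_all_finset]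
        intro u hu
        by_cases huv : u = v
        · exact Eventually.of_forall fun n h => absurd huv h
        · filter_upwards [eventually_nsmul_lt (hf u hu huv) hvf hg] with n hn _
          exact hn
      obtain ⟨n, hn⟩ := hev.exists
      have hC : S.inf (fun u => u (f ^ n * g)) = v (f ^ n * g) := by
        refine le_antisymm (Finset.inf_le hv) (Finset.le_inf fun u hu => ?_)
        by_cases huv : u = v
        · subst huv; exact le_refl _
        · rw [(hSval u hu).1, val_pow (hSval u hu), hvval.1, val_pow hvval]
          exact (hn u hu huv).le
      have heq : n • w f + w g = n • v f + v g := by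
        have h1 : w (f ^ n * g) = v (f ^ n * g) := (hCD _ hC).symm.trans hC
        rwa [(hTval w hw).1, val_pow (hTval w hw), hvval.1, val_pow hvval] at h1
      rw [hwf] at heq
      exact (WithTop.add_left_cancel (nsmul_ne_top' hvf n) heq).symm

end Aux

/-- Let `A` be an integral domain, finitely generated over an
algebraically closed field `k`, and let `S` be a finite, irredundant set of valuations
on `A`: for each `v ∈ S` there is `f` with `v f < v' f` for all `v' ∈ S \ {v}`.
Then `S` is determined by the function `h_S(f) = min_{v ∈ S} v f`: if `T` is another
irredundant finite set of valuations with `h_S = h_T`, then `S = T`. -/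
theorem irredundant_valuation_set_determined_by_min
    {k : Type*} [Field k] [IsAlgClosed k]
    {A : Type*} [CommRing A] [IsDomain A] [Algebra k A] [Algebra.FiniteType k A]
    (S T : Finset (A → WithTop ℝ))
    (hSval : ∀ v ∈ S, IsValuationOn k A v) (hTval : ∀ v ∈ T, IsValuationOn k A v)
    (hSirr : ∀ v ∈ S, ∃ f : A, ∀ v' ∈ S, v' ≠ v → v f < v' f)
    (hTirr : ∀ v ∈ T, ∃ f : A, ∀ v' ∈ T, v' ≠ v → v f < v' f)
    (hmin : ∀ f : A, S.inf (fun v => v f) = T.inf (fun v => v f)) :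
    S = T := by
  exact Finset.Subset.antisymm
    (subset_of_inf_eq hSval hTval hSirr hmin)
    (subset_of_inf_eq hTval hSval hTirr (fun f => (hmin f).symm))
end

section
/- Let K be a field extension of an infinite field k, and let K(t) be the field of rational functions with the k*-action (a·f)(t) := f(a^{−1}t). A valuation w on K(t) (trivial on k*) is k*-invariant if and only if for every Laurent polynomial f = Σ_{λ∈ℤ} f_λ t^λ with f_λ ∈ K one has w(f) = min_{λ∈ℤ} ( r(w)(f_λ) + λ w(t) ), where r(w) denotes the restriction of w to K. -/
/-- A (rank-one, real-valued) valuation on a field `L`, trivial on the subfield `k`: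
a map `L → ℝ ∪ {+∞}` which is multiplicative, satisfies the ultrametric inequality,
takes the value `+∞` exactly at `0`, and vanishes on nonzero constants from `k`. -/
def IsValuationTrivOn (k L : Type*) [Field k] [Field L] [Algebra k L]
    (w : L → WithTop ℝ) : Prop :=
  (∀ f g : L, w (f * g) = w f + w g) ∧
  (∀ f g : L, min (w f) (w g) ≤ w (f + g)) ∧
  (∀ f : L, w f = ⊤ ↔ f = 0) ∧
  (∀ c : k, c ≠ 0 → w (algebraMap k L c) = 0)

/-- The Laurent polynomial `Σ_λ f_λ t^λ` with coefficients `f : ℤ →₀ K`, as an element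
of the rational function field `K(t)`. -/
noncomputable def laurentEval {K : Type*} [Field K] (f : ℤ →₀ K) : RatFunc K :=
  f.sum fun lam c => RatFunc.C c * RatFunc.X ^ lam

/-- The action of `a ∈ k*` on Laurent polynomials: `(a·f)(t) = f(a⁻¹ t)`, i.e.
`a · (Σ f_λ t^λ) = Σ a^{−λ} f_λ t^λ`. -/
noncomputable def laurentAct {k K : Type*} [Field k] [Field K] [Algebra k K]
    (a : k) (f : ℤ →₀ K) : ℤ →₀ K :=
  f.sum fun lam c => Finsupp.single lam ((algebraMap k K a) ^ (-lam) * c)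


/-! If `w` satisfies the min formula, the action only rescales each coefficient by an element
of `k*`, which has valuation `0`, so the formula is invariant.

Conversely, let `w` be invariant. `w(f) ≥ min` is the ultrametric inequality. For `≤`, place
the support of `f` in a window `lo, …, lo + N - 1` and pick distinct `a_μ ∈ k*`, possible as
`k` is infinite. With `s` the vector of terms `f_{lo+j} t^{lo+j}`, the elements `a_μ · f` are
the entries of `A s` for the rescaled Vandermonde matrix `A_{μj} = a_μ^{-(lo+j)}`, and all
have valuation `w(f)` by invariance. As `A` is invertible over `k` and elements of `k` have
nonnegative valuation, every term of `s = A⁻¹ (A s)` has valuation at least `w(f)`. -/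

open Finset
open scoped Matrix

noncomputable def IsValuationTrivOn.toAddValuation {k L : Type*} [Field k] [Field L]
    [Algebra k L] {w : L → WithTop ℝ} (hw : IsValuationTrivOn k L w) : AddValuation L (WithTop ℝ) :=
  AddValuation.of w ((hw.2.2.1 0).2 rfl) (by simpa using hw.2.2.2 1 one_ne_zero) hw.2.1 hw.1

namespace AddValuation

variable {L : Type*} [Field L] (v : AddValuation L (WithTop ℝ))

theorem map_zpow {x : L} (hx : x ≠ 0) (n : ℤ) : v (x ^ n) = ((n : ℝ) : WithTop ℝ) * v x := by
  obtain ⟨r, hr⟩ := WithTop.ne_top_iff_exists.mp (v.ne_top_iff.2 hx)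
  obtain ⟨m, rfl | rfl⟩ := n.eq_nat_or_neg
  · rw [zpow_natCast, v.map_pow, ← hr, ← WithTop.coe_nsmul, ← WithTop.coe_mul, nsmul_eq_mul]
    norm_cast
  · rw [zpow_neg, zpow_natCast, v.map_inv, v.map_pow, ← hr, ← WithTop.coe_nsmul,
      ← WithTop.coe_mul, ← WithTop.LinearOrderedAddCommGroup.coe_neg, nsmul_eq_mul]
    norm_cast
    push_cast
    ring

variable {k : Type*} [Field k] [Algebra k L]
  (hk : ∀ c : k, c ≠ 0 → v (algebraMap k L c) = 0)
include hk

theorem map_algebraMap_nonneg (c : k) : 0 ≤ v (algebraMap k L c) := by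
  rcases eq_or_ne c 0 with rfl | hc
  · simp
  · exact (hk c hc).ge

theorem map_algebraMap_mul {c : k} (hc : c ≠ 0) (x : L) : v (algebraMap k L c * x) = v x := by
  rw [v.map_mul, hk c hc, zero_add]

theorem le_of_le_map_mulVec {ι : Type*} [Fintype ι] [DecidableEq ι] {M : Matrix ι ι k}
    (hM : IsUnit M.det) {s : ι → L} {m : WithTop ℝ}
    (h : ∀ μ, m ≤ v ((M.map (algebraMap k L) *ᵥ s) μ)) (j : ι) : m ≤ v (s j) := by
  have hs : s = M⁻¹.map (algebraMap k L) *ᵥ (M.map (algebraMap k L) *ᵥ s) := by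
    rw [Matrix.mulVec_mulVec, ← Matrix.map_mul, Matrix.nonsing_inv_mul M hM,
      Matrix.map_one _ (_root_.map_zero _) (_root_.map_one _), Matrix.one_mulVec]
  rw [hs]
  refine v.map_le_sum fun μ _ => ?_
  change m ≤ v (algebraMap k L (M⁻¹ j μ) * _)
  rw [v.map_mul]
  exact (h μ).trans (le_add_of_nonneg_left (v.map_algebraMap_nonneg hk _))

end AddValuation

section Laurent

variable {K : Type*} [Field K]

theorem laurentEval_eq_sum_of_support_subset {ι : Type*} [Fintype ι] (e : ι ↪ ℤ) {g : ℤ →₀ K}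
    (hg : g.support ⊆ univ.map e) :
    laurentEval g = ∑ i, RatFunc.C (g (e i)) * RatFunc.X ^ e i := by
  rw [laurentEval, Finsupp.sum_of_support_subset g hg _ fun _ _ => by simp, sum_map]

theorem AddValuation.map_C_mul_X_zpow (v : AddValuation (RatFunc K) (WithTop ℝ)) (c : K)
    (n : ℤ) : v (RatFunc.C c * RatFunc.X ^ n) = v (RatFunc.C c) + (n : ℝ) * v RatFunc.X := by
  rw [v.map_mul, v.map_zpow RatFunc.X_ne_zero]

variable {k : Type*} [Field k] [Algebra k K]

theorem laurentAct_apply (a : k) (f : ℤ →₀ K) (n : ℤ) :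
    laurentAct a f n = algebraMap k K a ^ (-n) * f n := by
  rw [laurentAct, Finsupp.sum_apply, Finsupp.sum_eq_single n (fun m _ hm => by simp [hm])
    (by simp), Finsupp.single_eq_same]

theorem C_laurentAct_apply (a : k) (f : ℤ →₀ K) (n : ℤ) :
    RatFunc.C (laurentAct a f n) = algebraMap k (RatFunc K) a ^ (-n) * RatFunc.C (f n) := by
  rw [laurentAct_apply, map_mul, map_zpow₀, RatFunc.C, ← IsScalarTower.algebraMap_apply]

theorem support_laurentAct {a : k} (ha : a ≠ 0) (f : ℤ →₀ K) :
    (laurentAct a f).support = f.support := by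
  ext n
  simp [laurentAct_apply, ha, zpow_ne_zero]

end Laurent

theorem isUnit_det_zpow_vandermonde {k : Type*} [Field k] {N : ℕ} {a : Fin N → k}
    (ha : ∀ μ, a μ ≠ 0) (ha' : Function.Injective a) (n₀ : ℤ) :
    IsUnit (Matrix.of fun μ j : Fin N => a μ ^ (-(n₀ + j))).det := by
  have hM : Matrix.of (fun μ j : Fin N => a μ ^ (-(n₀ + j))) =
      Matrix.diagonal (fun μ => a μ ^ (-n₀)) * Matrix.vandermonde fun μ => (a μ)⁻¹ := by
    ext μ j
    simp [zpow_add₀ (ha μ), inv_pow, mul_comm]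
  rw [hM, Matrix.det_mul, Matrix.det_diagonal, isUnit_iff_ne_zero]
  refine mul_ne_zero (prod_ne_zero_iff.2 fun μ _ => zpow_ne_zero _ (ha μ)) ?_
  exact Matrix.det_vandermonde_ne_zero_iff.2 (inv_injective.comp ha')

theorem exists_injective_ne_zero (k : Type*) [Zero k] [Infinite k] (N : ℕ) :
    ∃ a : Fin N → k, Function.Injective a ∧ ∀ μ, a μ ≠ 0 :=
  let e := (Set.finite_singleton (0 : k)).infinite_compl.natEmbedding
  ⟨fun μ => e μ, fun _ _ h => Fin.ext (e.injective (Subtype.ext h)), fun μ => (e μ).2⟩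

namespace AddValuation

variable {k K : Type*} [Field k] [Field K] [Algebra k K]
  (v : AddValuation (RatFunc K) (WithTop ℝ))
  (hk : ∀ c : k, c ≠ 0 → v (algebraMap k (RatFunc K) c) = 0)
include hk

theorem map_laurentEval_le_of_invariant [Infinite k]
    (hinv : ∀ a : k, a ≠ 0 → ∀ f, v (laurentEval (laurentAct a f)) = v (laurentEval f))
    {f : ℤ →₀ K} {n : ℤ} (hn : n ∈ f.support) :
    v (laurentEval f) ≤ v (RatFunc.C (f n) * RatFunc.X ^ n) := by
  obtain ⟨lo, hlo⟩ := f.support.bddBelow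
  obtain ⟨hi, hhi⟩ := f.support.bddAbove
  let e : Fin (hi - lo + 1).toNat ↪ ℤ :=
    ⟨fun j => lo + j, fun i j hij => Fin.ext (by simpa using hij)⟩
  have hsupp : f.support ⊆ univ.map e := fun m hm => by
    have := hlo hm
    have := hhi hm
    exact mem_map.2
      ⟨⟨(m - lo).toNat, by omega⟩, mem_univ _, show lo + ((m - lo).toNat : ℤ) = m by omega⟩
  obtain ⟨a, ha_inj, ha⟩ := exists_injective_ne_zero k (hi - lo + 1).toNat
  let s j := RatFunc.C (f (e j)) * RatFunc.X ^ e j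
  have key := v.le_of_le_map_mulVec hk (isUnit_det_zpow_vandermonde ha ha_inj lo) (s := s)
    (m := v (laurentEval f)) fun μ => by
      rw [← hinv (a μ) (ha μ) f, laurentEval_eq_sum_of_support_subset e
        (support_laurentAct (ha μ) f ▸ hsupp)]
      refine le_of_eq (congrArg v (sum_congr rfl fun j _ => ?_))
      rw [C_laurentAct_apply, ← mul_assoc, ← map_zpow₀]
      rfl
  obtain ⟨j, -, rfl⟩ := mem_map.1 (hsupp hn)
  exact key j

theorem map_laurentEval_eq_inf_of_invariant [Infinite k]
    (hinv : ∀ a : k, a ≠ 0 → ∀ f, v (laurentEval (laurentAct a f)) = v (laurentEval f))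
    (f : ℤ →₀ K) :
    v (laurentEval f) =
      f.support.inf fun n => v (RatFunc.C (f n)) + ((n : ℝ) : WithTop ℝ) * v RatFunc.X := by
  simp_rw [← map_C_mul_X_zpow]
  exact le_antisymm (Finset.le_inf fun n hn => v.map_laurentEval_le_of_invariant hk hinv hn)
    (v.map_le_sum fun n hn => inf_le hn)

theorem map_laurentEval_laurentAct_of_eq_inf
    (hmin : ∀ f : ℤ →₀ K, v (laurentEval f) =
      f.support.inf fun n => v (RatFunc.C (f n)) + ((n : ℝ) : WithTop ℝ) * v RatFunc.X)
    {a : k} (ha : a ≠ 0) (f : ℤ →₀ K) :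
    v (laurentEval (laurentAct a f)) = v (laurentEval f) := by
  rw [hmin, hmin, support_laurentAct ha]
  refine inf_congr rfl fun n _ => ?_
  rw [C_laurentAct_apply, ← map_zpow₀, v.map_algebraMap_mul hk (zpow_ne_zero _ ha)]

end AddValuation

/-- Let `K` be a field extension of an infinite field `k`, and `K(t)`
the rational function field with the `k*`-action `(a·f)(t) = f(a⁻¹t)`.  A valuation `w`
on `K(t)` (trivial on `k*`) is `k*`-invariant iff for every Laurent polynomial
`f = Σ_λ f_λ t^λ` one has `w(f) = min_λ ( r(w)(f_λ) + λ·w(t) )`, where `r(w)` is the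
restriction of `w` to `K` (here the minimum is realized as the infimum over the finite
support of `f`, the omitted terms being `+∞`). -/
theorem kstar_invariant_valuation_iff_min_formula
    {k K : Type*} [Field k] [Infinite k] [Field K] [Algebra k K]
    (w : RatFunc K → WithTop ℝ)
    (hw : IsValuationTrivOn k (RatFunc K) w) :
    (∀ (a : k), a ≠ 0 → ∀ f : ℤ →₀ K, w (laurentEval (laurentAct a f)) = w (laurentEval f)) ↔
    (∀ f : ℤ →₀ K,
      w (laurentEval f) =
        f.support.inf fun lam =>
          w (RatFunc.C (f lam)) + ((lam : ℝ) : WithTop ℝ) * w RatFunc.X) :=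
  ⟨hw.toAddValuation.map_laurentEval_eq_inf_of_invariant hw.2.2.2,
    fun hmin _ ha => hw.toAddValuation.map_laurentEval_laurentAct_of_eq_inf hw.2.2.2 hmin ha⟩
end

section
/- Let ν be a compactly supported probability measure on ℝ with barycenter zero (∫ λ dν = 0), and let λ_max = max(supp ν). Fix n ≥ 1 and assume the function f(λ) := ν{x ≥ λ}^{1/n} is concave on (−∞, λ_max). Then (2 n^n/(n+1)^{n+1}) λ_max ≤ ∫ |λ| dν ≤ 2 λ_max. -/
/-!
Write `P = ∫ x⁺ dν` and `N = ∫ x⁻ dν`. The barycenter condition gives `P = N`, so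
`∫ |x| dν = 2P ≤ 2 λmax`. By the layer-cake formula `P = ∫₀^∞ F` and `N = ∫₀^∞ (1 - F (-t)) dt`,
where `F λ = ν[λ, ∞)`. Fix `0 < b < λmax` and let `g = F^{1/n}`, `q = g 0`. Concavity of `g`
through the points `0` and `b` gives `g t ≥ q (1 - t/b)` on `(0, b)` and `g (-t) ≤ q (1 + t/b)` for
`t > 0`, hence `P ≥ q^n b/(n+1)` and `N ≥ b/(n+1) (n/q - (n+1) + q^n)`. The first bound is at least
`(n/(n+1))^n b/(n+1)` when `q ≥ n/(n+1)`, the second when `q ≤ n/(n+1)`, because `q ↦ n/q + q^n`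
is decreasing on `(0, 1]`. Letting `b → λmax` gives the lower bound.
-/

open MeasureTheory Set

theorem antitoneOn_natCast_div_add_pow (n : ℕ) :
    AntitoneOn (fun q : ℝ => n / q + q ^ n) (Ioc 0 1) := by
  rintro q ⟨hq0, -⟩ r ⟨hr0, hr1⟩ hqr
  have hpow : r ^ n - q ^ n ≤ n * (r - q) := by
    have h := abs_pow_sub_pow_le r q n
    rw [abs_of_nonneg (sub_nonneg.2 hqr), abs_of_pos hr0, abs_of_pos hq0,
      max_eq_left hqr] at h
    calc r ^ n - q ^ n ≤ (r - q) * n * r ^ (n - 1) := (le_abs_self _).trans h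
      _ ≤ (r - q) * n := mul_le_of_le_one_right (by positivity) (pow_le_one₀ hr0.le hr1)
      _ = n * (r - q) := mul_comm _ _
  have hdiv : (n : ℝ) * (r - q) ≤ n / q - n / r := by
    rw [div_sub_div _ _ hq0.ne' hr0.ne', le_div_iff₀ (by positivity)]
    nlinarith [mul_nonneg (mul_nonneg n.cast_nonneg (sub_nonneg.2 hqr))
      (sub_nonneg.2 (mul_le_one₀ (hqr.trans hr1) hr0.le hr1))]
  show n / r + r ^ n ≤ n / q + q ^ n
  linarith

theorem ConcaveOn.sub_mul_le_sub_mul {s : Set ℝ} {g : ℝ → ℝ} (hg : ConcaveOn ℝ s g)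
    {x y z : ℝ} (hx : x ∈ s) (hz : z ∈ s) (hxy : x < y) (hyz : y < z) (hgz : 0 ≤ g z) :
    (z - y) * g x ≤ (z - x) * g y := by
  have h := hg.neg.secant_mono_aux1 hx hz hxy hyz
  simp only [Pi.neg_apply] at h
  nlinarith [mul_nonneg (sub_nonneg.2 hxy.le) hgz]

theorem integral_sub_pow (b : ℝ) (n : ℕ) :
    ∫ t in (0 : ℝ)..b, (b - t) ^ n = b ^ (n + 1) / (n + 1) := by
  simp [intervalIntegral.integral_comp_sub_left (fun t => t ^ n), integral_pow]

theorem integral_add_pow (b T : ℝ) (n : ℕ) :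
    ∫ t in (0 : ℝ)..T, (b + t) ^ n = ((b + T) ^ (n + 1) - b ^ (n + 1)) / (n + 1) := by
  simp [intervalIntegral.integral_comp_add_left (fun t => t ^ n), integral_pow]

section ConcaveProfile

variable {g : ℝ → ℝ} {L b : ℝ} {n : ℕ}

theorem pow_mul_le_setIntegral_pow_of_concaveOn (hg : ConcaveOn ℝ (Iio L) g)
    (hg0 : ∀ t, 0 ≤ g t) (hb : 0 < b) (hbL : b < L)
    (hint : IntegrableOn (fun t => g t ^ n) (Ioi 0)) :
    g 0 ^ n * (b / (n + 1)) ≤ ∫ t in Ioi 0, g t ^ n := by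
  have hchord : ∀ t ∈ Ioo 0 b, (g 0 / b) ^ n * (b - t) ^ n ≤ g t ^ n := fun t ⟨ht0, htb⟩ => by
    have h := hg.sub_mul_le_sub_mul (hb.trans hbL) hbL ht0 htb (hg0 b)
    rw [← mul_pow]
    gcongr
    · exact mul_nonneg (div_nonneg (hg0 0) hb.le) (sub_nonneg.2 htb.le)
    · rw [div_mul_eq_mul_div, div_le_iff₀ hb]
      simpa [mul_comm] using h
  calc g 0 ^ n * (b / (n + 1)) = ∫ t in (0 : ℝ)..b, (g 0 / b) ^ n * (b - t) ^ n := by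
        rw [intervalIntegral.integral_const_mul, integral_sub_pow, div_pow, pow_succ]
        field_simp
    _ ≤ ∫ t in (0 : ℝ)..b, g t ^ n :=
        intervalIntegral.integral_mono_on_of_le_Ioo hb.le
          (Continuous.intervalIntegrable (by fun_prop) _ _)
          ((intervalIntegrable_iff_integrableOn_Ioc_of_le hb.le).2
            (hint.mono_set Ioc_subset_Ioi_self)) hchord
    _ ≤ ∫ t in Ioi 0, g t ^ n := by
        rw [intervalIntegral.integral_of_le hb.le]
        exact setIntegral_mono_set hint (ae_of_all _ fun t => pow_nonneg (hg0 t) n)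
          Ioc_subset_Ioi_self.eventuallyLE

theorem mul_le_setIntegral_one_sub_pow_of_concaveOn (hg : ConcaveOn ℝ (Iio L) g)
    (hg0 : ∀ t, 0 ≤ g t) (hg1 : ∀ t, g t ≤ 1) (hb : 0 < b) (hbL : b < L) (hq : 0 < g 0)
    (hint : IntegrableOn (fun t => 1 - g (-t) ^ n) (Ioi 0)) :
    b / (n + 1) * (n / g 0 - (n + 1) + g 0 ^ n) ≤ ∫ t in Ioi 0, 1 - g (-t) ^ n := by
  set q := g 0
  -- past `T` the chord bound `g (-t) ≤ q (b + t) / b` exceeds `1` and says nothing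
  set T := b / q - b with hT
  have hT0 : 0 ≤ T := by
    rw [hT, sub_nonneg, le_div_iff₀ hq]
    exact mul_le_of_le_one_right hb.le (hg1 0)
  have hchord : ∀ t ∈ Ioo 0 T, 1 - (q / b) ^ n * (b + t) ^ n ≤ 1 - g (-t) ^ n :=
    fun t ⟨ht0, _⟩ => by
      have h := hg.sub_mul_le_sub_mul (x := -t) (neg_neg_iff_pos.2 ht0 |>.trans (hb.trans hbL))
        hbL (neg_neg_iff_pos.2 ht0) hb (hg0 b)
      rw [← mul_pow, sub_le_sub_iff_left]
      gcongr
      · exact hg0 _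
      · rw [div_mul_eq_mul_div, le_div_iff₀ hb]
        simpa [mul_comm, add_comm] using h
  calc b / (n + 1) * (n / q - (n + 1) + q ^ n)
        = ∫ t in (0 : ℝ)..T, 1 - (q / b) ^ n * (b + t) ^ n := by
        rw [intervalIntegral.integral_sub intervalIntegrable_const
          (Continuous.intervalIntegrable (by fun_prop) _ _), intervalIntegral.integral_const_mul,
          integral_add_pow, intervalIntegral.integral_const, hT, add_sub_cancel, div_pow,
          div_pow, pow_succ, pow_succ]
        simp only [sub_zero, smul_eq_mul, mul_one]
        field_simp [hq.ne']
        ring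
    _ ≤ ∫ t in (0 : ℝ)..T, 1 - g (-t) ^ n :=
        intervalIntegral.integral_mono_on_of_le_Ioo hT0 (Continuous.intervalIntegrable
          (by fun_prop) _ _) ((intervalIntegrable_iff_integrableOn_Ioc_of_le hT0).2
            (hint.mono_set Ioc_subset_Ioi_self)) hchord
    _ ≤ ∫ t in Ioi 0, 1 - g (-t) ^ n := by
        rw [intervalIntegral.integral_of_le hT0]
        exact setIntegral_mono_set hint
          (ae_of_all _ fun t => sub_nonneg.2 (pow_le_one₀ (hg0 _) (hg1 _)))
          Ioc_subset_Ioi_self.eventuallyLE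

theorem pow_div_mul_le_max_setIntegral_of_lt_of_concaveOn (hn : 0 < n)
    (hg : ConcaveOn ℝ (Iio L) g) (hg0 : ∀ t, 0 ≤ g t) (hg1 : ∀ t, g t ≤ 1) (hq : 0 < g 0)
    (hb : 0 < b) (hbL : b < L)
    (hint₁ : IntegrableOn (fun t => g t ^ n) (Ioi 0))
    (hint₂ : IntegrableOn (fun t => 1 - g (-t) ^ n) (Ioi 0)) :
    ((n : ℝ) / (n + 1)) ^ n / (n + 1) * b ≤
      max (∫ t in Ioi 0, g t ^ n) (∫ t in Ioi 0, 1 - g (-t) ^ n) := by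
  set r : ℝ := n / (n + 1)
  have hr1 : r ≤ 1 := div_le_one_of_le₀ (by linarith) (by positivity)
  rw [div_mul_eq_mul_div, mul_div_assoc]
  -- at `g 0 = r` the two bounds agree, since `n / r = n + 1`
  rcases le_or_gt r (g 0) with hr | hr
  · refine le_max_of_le_left (le_trans ?_ (pow_mul_le_setIntegral_pow_of_concaveOn hg hg0 hb hbL
      hint₁))
    gcongr
  · refine le_max_of_le_right (le_trans ?_
      (mul_le_setIntegral_one_sub_pow_of_concaveOn hg hg0 hg1 hb hbL hq hint₂))
    have hmono := antitoneOn_natCast_div_add_pow n ⟨hq, hr.le.trans hr1⟩ ⟨hq.trans hr, hr1⟩ hr.le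
    have hnr : (n : ℝ) / r = n + 1 := by
      rw [div_div_eq_mul_div, mul_div_cancel_left₀ _ (by positivity)]
    simp only [hnr] at hmono
    rw [mul_comm]
    gcongr
    linarith

theorem pow_div_mul_le_max_setIntegral_of_concaveOn (hn : 0 < n) (hg : ConcaveOn ℝ (Iio L) g)
    (hg0 : ∀ t, 0 ≤ g t) (hg1 : ∀ t, g t ≤ 1) (hq : 0 < g 0)
    (hint₁ : IntegrableOn (fun t => g t ^ n) (Ioi 0))
    (hint₂ : IntegrableOn (fun t => 1 - g (-t) ^ n) (Ioi 0)) :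
    ((n : ℝ) / (n + 1)) ^ n / (n + 1) * L ≤
      max (∫ t in Ioi 0, g t ^ n) (∫ t in Ioi 0, 1 - g (-t) ^ n) := by
  have hc : 0 < ((n : ℝ) / (n + 1)) ^ n / (n + 1) := by positivity
  rw [mul_comm, ← le_div_iff₀ hc]
  refine le_of_forall_lt_imp_le_of_dense fun b hbL => ?_
  rcases le_or_gt b 0 with hb | hb
  · exact hb.trans (div_nonneg (le_max_of_le_left (setIntegral_nonneg measurableSet_Ioi
      fun t _ => pow_nonneg (hg0 t) n)) hc.le)
  · rw [le_div_iff₀ hc, mul_comm]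
    exact pow_div_mul_le_max_setIntegral_of_lt_of_concaveOn hn hg hg0 hg1 hq hb hbL hint₁ hint₂

end ConcaveProfile

section Layercake

variable {α : Type*} [MeasurableSpace α] {μ : Measure α} {f : α → ℝ}

theorem MeasureTheory.Integrable.integrableOn_measureReal_le (hf : Integrable f μ)
    (hf0 : 0 ≤ᵐ[μ] f) : IntegrableOn (fun t => μ.real {a | t ≤ f a}) (Ioi 0) :=
  integrable_toReal_of_lintegral_ne_top
    (Antitone.measurable (f := fun t => μ {a | t ≤ f a})
      fun _ _ hst => measure_mono fun _ ha => hst.trans ha).aemeasurable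
    (by rw [← lintegral_eq_lintegral_meas_le μ hf0 hf.aemeasurable]
        exact hf.lintegral_lt_top.ne)

theorem MeasureTheory.Integrable.integrableOn_measureReal_lt (hf : Integrable f μ)
    (hf0 : 0 ≤ᵐ[μ] f) : IntegrableOn (fun t => μ.real {a | t < f a}) (Ioi 0) :=
  integrable_toReal_of_lintegral_ne_top
    (Antitone.measurable (f := fun t => μ {a | t < f a})
      fun _ _ hst => measure_mono fun _ ha => hst.trans_lt ha).aemeasurable
    (by rw [← lintegral_eq_lintegral_meas_lt μ hf0 hf.aemeasurable]
        exact hf.lintegral_lt_top.ne)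

end Layercake

section RealLine

variable {ν : Measure ℝ}

theorem integrable_id_of_measure_Iio_eq_zero_of_measure_Ioi_eq_zero [IsFiniteMeasure ν]
    {a c : ℝ} (ha : ν (Iio a) = 0) (hc : ν (Ioi c) = 0) : Integrable (fun x => x) ν := by
  refine Integrable.of_bound aestronglyMeasurable_id (max |a| |c|) ?_
  filter_upwards [measure_eq_zero_iff_ae_notMem.1 ha, measure_eq_zero_iff_ae_notMem.1 hc]
    with x hxa hxc
  simp only [mem_Iio, mem_Ioi, not_lt] at hxa hxc
  exact abs_le_max_abs_abs hxa hxc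

theorem integral_max_neg_zero_eq_integral_max_zero (hint : Integrable (fun x => x) ν)
    (hbar : ∫ x, x ∂ν = 0) : ∫ x, max (-x) 0 ∂ν = ∫ x, max x 0 ∂ν := by
  have h := integral_sub hint.pos_part hint.neg_part
  simp only [max_zero_sub_max_neg_zero_eq_self, hbar] at h
  linarith

theorem integral_abs_eq_two_mul_integral_max_zero (hint : Integrable (fun x => x) ν)
    (hbar : ∫ x, x ∂ν = 0) : ∫ x, |x| ∂ν = 2 * ∫ x, max x 0 ∂ν := by
  simp only [← max_zero_add_max_neg_zero_eq_abs_self, integral_add hint.pos_part hint.neg_part,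
    integral_max_neg_zero_eq_integral_max_zero hint hbar]
  ring

theorem measureReal_setOf_le_max_zero_eqOn :
    EqOn (fun t => ν.real {x | t ≤ max x 0}) (fun t => ν.real (Ici t)) (Ioi 0) := by
  intro t (ht : 0 < t)
  simp only [le_max_iff, not_le.2 ht, or_false]
  rfl

theorem measureReal_setOf_lt_max_neg_zero_eqOn [IsProbabilityMeasure ν] :
    EqOn (fun t => ν.real {x | t < max (-x) 0}) (fun t => 1 - ν.real (Ici (-t))) (Ioi 0) := by
  intro t (ht : 0 < t)
  simp only [lt_max_iff, lt_neg, not_lt.2 ht.le, or_false]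
  rw [← probReal_compl_eq_one_sub measurableSet_Ici, compl_Ici]
  rfl

theorem integral_max_zero_eq_setIntegral_measureReal_Ici (hint : Integrable (fun x => x) ν) :
    ∫ x, max x 0 ∂ν = ∫ t in Ioi 0, ν.real (Ici t) := by
  rw [hint.pos_part.integral_eq_integral_meas_le (ae_of_all _ fun x => le_max_right x 0)]
  exact setIntegral_congr_fun measurableSet_Ioi measureReal_setOf_le_max_zero_eqOn

theorem integrableOn_measureReal_Ici (hint : Integrable (fun x => x) ν) :
    IntegrableOn (fun t => ν.real (Ici t)) (Ioi 0) :=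
  (hint.pos_part.integrableOn_measureReal_le (ae_of_all _ fun x => le_max_right x 0)).congr_fun
    measureReal_setOf_le_max_zero_eqOn measurableSet_Ioi

theorem integral_max_neg_zero_eq_setIntegral_one_sub_measureReal_Ici [IsProbabilityMeasure ν]
    (hint : Integrable (fun x => x) ν) :
    ∫ x, max (-x) 0 ∂ν = ∫ t in Ioi 0, 1 - ν.real (Ici (-t)) := by
  rw [hint.neg_part.integral_eq_integral_meas_lt (ae_of_all _ fun x => le_max_right (-x) 0)]
  exact setIntegral_congr_fun measurableSet_Ioi measureReal_setOf_lt_max_neg_zero_eqOn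

theorem integrableOn_one_sub_measureReal_Ici_neg [IsProbabilityMeasure ν]
    (hint : Integrable (fun x => x) ν) :
    IntegrableOn (fun t => 1 - ν.real (Ici (-t))) (Ioi 0) :=
  (hint.neg_part.integrableOn_measureReal_lt (ae_of_all _ fun x => le_max_right (-x) 0)).congr_fun
    measureReal_setOf_lt_max_neg_zero_eqOn measurableSet_Ioi

theorem pow_div_mul_le_integral_max_zero_of_concaveOn [IsProbabilityMeasure ν] {n : ℕ} {L : ℝ}
    (hn : 0 < n) (hint : Integrable (fun x => x) ν) (hbar : ∫ x, x ∂ν = 0)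
    (hq : 0 < ν (Ici 0)) (hconc : ConcaveOn ℝ (Iio L) fun t => ν.real (Ici t) ^ (1 / (n : ℝ))) :
    ((n : ℝ) / (n + 1)) ^ n / (n + 1) * L ≤ ∫ x, max x 0 ∂ν := by
  have hgn : ∀ t, (ν.real (Ici t) ^ (1 / (n : ℝ))) ^ n = ν.real (Ici t) := fun t => by
    rw [one_div, Real.rpow_inv_natCast_pow measureReal_nonneg hn.ne']
  have := pow_div_mul_le_max_setIntegral_of_concaveOn hn hconc (fun t => by positivity)
    (fun t => Real.rpow_le_one measureReal_nonneg measureReal_le_one (by positivity))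
    (Real.rpow_pos_of_pos (ENNReal.toReal_pos hq.ne' (measure_ne_top _ _)) _)
    (by simpa only [hgn] using integrableOn_measureReal_Ici hint)
    (by simpa only [hgn] using integrableOn_one_sub_measureReal_Ici_neg hint)
  simpa only [hgn, ← integral_max_zero_eq_setIntegral_measureReal_Ici hint,
    ← integral_max_neg_zero_eq_setIntegral_one_sub_measureReal_Ici hint,
    integral_max_neg_zero_eq_integral_max_zero hint hbar, max_self] using this

end RealLine

/-- Let `ν` be a compactly supported probability measure on `ℝ` with
barycenter zero, and `λmax = max (supp ν)` (encoded by: `ν` gives no mass above `λmax`,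
gives positive mass to every `(λmax − ε, ∞)`, and has support bounded below).  Fix
`n ≥ 1` and assume `λ ↦ ν[λ,∞)^{1/n}` is concave on `(−∞, λmax)`.  Then
`(2 nⁿ/(n+1)^{n+1}) λmax ≤ ∫ |λ| dν ≤ 2 λmax`. -/
theorem duistermaat_heckman_L1_J_comparison
    (n : ℕ) (hn : 1 ≤ n)
    (ν : Measure ℝ) [IsProbabilityMeasure ν] (lammax : ℝ)
    (h_upper : ν (Set.Ioi lammax) = 0)
    (h_max : ∀ ε : ℝ, 0 < ε → 0 < ν (Set.Ioi (lammax - ε)))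
    (h_lower : ∃ a : ℝ, ν (Set.Iio a) = 0)
    (hbar : ∫ x, x ∂ν = 0)
    (hconc : ConcaveOn ℝ (Set.Iio lammax)
      (fun lam => (ν (Set.Ici lam)).toReal ^ (1 / (n : ℝ)))) :
    2 * (n : ℝ) ^ n / ((n : ℝ) + 1) ^ (n + 1) * lammax ≤ ∫ x, |x| ∂ν ∧
    ∫ x, |x| ∂ν ≤ 2 * lammax := by
  obtain ⟨a, ha⟩ := h_lower
  have hint := integrable_id_of_measure_Iio_eq_zero_of_measure_Ioi_eq_zero ha h_upper
  have hle : ∀ᵐ x ∂ν, x ≤ lammax := by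
    simpa using measure_eq_zero_iff_ae_notMem.1 h_upper
  have hL : 0 ≤ lammax := by
    simpa [hbar] using integral_mono_ae hint (integrable_const lammax) hle
  have hlower : ((n : ℝ) / (n + 1)) ^ n / (n + 1) * lammax ≤ ∫ x, max x 0 ∂ν := by
    rcases hL.eq_or_lt with h | h
    · rw [← h, mul_zero]
      exact integral_nonneg fun x => le_max_right x 0
    exact pow_div_mul_le_integral_max_zero_of_concaveOn hn hint hbar
      ((sub_self lammax ▸ h_max lammax h).trans_le (measure_mono Ioi_subset_Ici_self)) hconc
  have hupper : ∫ x, max x 0 ∂ν ≤ lammax := by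
    simpa using integral_mono_ae hint.pos_part (integrable_const lammax)
      (hle.mono fun x hx => max_le hx hL)
  rw [integral_abs_eq_two_mul_integral_max_zero hint hbar]
  constructor
  · calc 2 * (n : ℝ) ^ n / ((n : ℝ) + 1) ^ (n + 1) * lammax
          = 2 * (((n : ℝ) / (n + 1)) ^ n / (n + 1) * lammax) := by
          rw [div_pow, div_div, pow_succ]
          ring
      _ ≤ 2 * ∫ x, max x 0 ∂ν := by gcongr
  · linarith
end

section
/- Let ν be a compactly supported probability measure on ℝ with ∫ λ dν = 0, λ_max := max(supp ν) = 1, and suppose f(λ) := ν{x ≥ λ}^{1/n} is concave on (−∞,1) for some n ≥ 1. Then f(0) ≥ n/(n+1). -/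
/-!
Let `f` be the concave function and `b = f 0 < 1`. The right derivative of `f` at `0` gives a
supporting line `f λ ≤ b - s λ` on `(-∞, 1)`, and `s > 0` because `f = 1` left of the support
of `ν`. Hence the tail `ν[λ, ∞)` is at most `(b - s λ)ⁿ` for every `λ < 1`. Writing the mean of
`ν` by the layer-cake formula and using this bound on `(0, 1)` and on `(-(1 - b) / s, 0)` gives
`0 = ∫ x dν ≤ (1 / (n + 1) - (1 - b)) / s`.
-/

open MeasureTheory Set intervalIntegral

theorem ConvexOn.add_rightDeriv_mul_sub_le {S : Set ℝ} {f : ℝ → ℝ} {x y : ℝ}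
    (hf : ConvexOn ℝ S f) (hx : x ∈ interior S) (hy : y ∈ S) :
    f x + derivWithin f (Ioi x) x * (y - x) ≤ f y := by
  rcases lt_trichotomy y x with hyx | rfl | hxy
  · have h := (hf.slope_le_leftDeriv_of_mem_interior hy hx hyx).trans
      (hf.leftDeriv_le_rightDeriv_of_mem_interior hx)
    rw [slope_def_field, div_le_iff₀ (sub_pos.2 hyx)] at h
    linarith
  · simp
  · have h := hf.rightDeriv_le_slope_of_mem_interior hx hy hxy
    rw [slope_def_field, le_div_iff₀ (sub_pos.2 hxy)] at h
    linarith

theorem ConcaveOn.le_add_rightDeriv_mul_sub {S : Set ℝ} {f : ℝ → ℝ} {x y : ℝ}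
    (hf : ConcaveOn ℝ S f) (hx : x ∈ interior S) (hy : y ∈ S) :
    f y ≤ f x + derivWithin f (Ioi x) x * (y - x) := by
  have h := hf.neg.add_rightDeriv_mul_sub_le hx hy
  rw [derivWithin.neg] at h
  simp only [Pi.neg_apply] at h
  linarith

theorem integral_add_mul_pow (b s T : ℝ) (hs : s ≠ 0) (n : ℕ) :
    ∫ t in 0..T, (b + s * t) ^ n = ((b + s * T) ^ (n + 1) - b ^ (n + 1)) / (s * (n + 1)) := by
  have h := integral_comp_mul_add (fun x : ℝ ↦ x ^ n) hs b (a := 0) (b := T)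
  simp only [mul_zero, zero_add, integral_pow, smul_eq_mul] at h
  rw [show (fun t ↦ (b + s * t) ^ n) = fun t ↦ (s * t + b) ^ n by ext; ring, h]
  field_simp
  ring_nf

theorem integral_id_eq_integral_Ici_sub_integral_Iic {ν : Measure ℝ} [IsFiniteMeasure ν]
    {c M : ℝ} (hc : 0 ≤ c) (hM : 0 ≤ M) (h_upper : ν (Ioi c) = 0) (h_lower : ν (Iio (-M)) = 0) :
    ∫ x, x ∂ν = (∫ t in 0..c, ν.real (Ici t)) - ∫ t in 0..M, ν.real (Iic (-t)) := by
  have hle : ∀ᵐ x ∂ν, x ≤ c := (measure_eq_zero_iff_ae_notMem.1 h_upper).mono fun _ h ↦ not_lt.1 h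
  have hge : ∀ᵐ x ∂ν, -M ≤ x := (measure_eq_zero_iff_ae_notMem.1 h_lower).mono fun _ h ↦ not_lt.1 h
  have hint : Integrable (fun x : ℝ ↦ x) ν := by
    refine Integrable.of_bound aestronglyMeasurable_id (max M c) ?_
    filter_upwards [hle, hge] with x h1 h2
    rw [Real.norm_eq_abs, abs_le, neg_le, le_max_iff, le_max_iff]
    exact ⟨Or.inl (neg_le.1 h2), Or.inr h1⟩
  have hint_pos : Integrable (fun x : ℝ ↦ max x 0) ν := hint.pos_part
  have hint_neg : Integrable (fun x : ℝ ↦ max (-x) 0) ν := hint.neg.pos_part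
  have hpos : ∫ x, max x 0 ∂ν = ∫ t in 0..c, ν.real (Ici t) := by
    rw [hint_pos.integral_eq_integral_Ioc_meas_le (ae_of_all _ fun _ ↦ le_max_right _ _)
      (hle.mono fun _ h ↦ max_le h hc), integral_of_le hc]
    refine setIntegral_congr_fun measurableSet_Ioc fun t ht ↦ ?_
    simp only [le_max_iff, not_le.2 ht.1, or_false]
    rfl
  have hneg : ∫ x, max (-x) 0 ∂ν = ∫ t in 0..M, ν.real (Iic (-t)) := by
    rw [hint_neg.integral_eq_integral_Ioc_meas_le (ae_of_all _ fun _ ↦ le_max_right _ _)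
      (hge.mono fun _ h ↦ max_le (neg_le.1 h) hM), integral_of_le hM]
    refine setIntegral_congr_fun measurableSet_Ioc fun t ht ↦ ?_
    simp only [le_max_iff, not_le.2 ht.1, or_false, le_neg]
    rfl
  rw [← hpos, ← hneg, ← integral_sub hint_pos hint_neg]
  simp only [max_zero_sub_max_neg_zero_eq_self]

section TailBounds

variable {ν : Measure ℝ} {f : ℝ → ℝ} {n : ℕ} {b s : ℝ}

theorem integral_measureReal_Ici_le [IsFiniteMeasure ν] (hs : 0 < s)
    (hF : ∀ t, ν.real (Ici t) = f t ^ n) (hf : ∀ t, 0 ≤ f t) (hline : ∀ t < 1, f t ≤ b - s * t) :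
    ∫ t in 0..1, ν.real (Ici t) ≤ b ^ (n + 1) / (s * (n + 1)) := by
  have hsb : s ≤ b := by
    have h : (1 : ℝ) ≤ b / s := le_of_forall_lt_imp_le_of_dense fun t ht ↦
      (le_div_iff₀' hs).2 (by linarith [hf t, hline t ht])
    rwa [le_div_iff₀ hs, one_mul] at h
  have htail : IntervalIntegrable (fun t ↦ ν.real (Ici t)) volume 0 1 :=
    Antitone.intervalIntegrable fun _ _ h ↦ measureReal_mono (Ici_subset_Ici.2 h)
  calc ∫ t in 0..1, ν.real (Ici t)
      ≤ ∫ t in 0..1, (b + -s * t) ^ n :=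
        integral_mono_on_of_le_Ioo zero_le_one htail
          (Continuous.intervalIntegrable (by fun_prop) _ _) fun t ht ↦ by
            rw [hF]; exact pow_le_pow_left₀ (hf t) (by linarith [hline t ht.2]) n
    _ = (b ^ (n + 1) - (b - s) ^ (n + 1)) / (s * (n + 1)) := by
        rw [integral_add_mul_pow _ _ _ (neg_ne_zero.2 hs.ne')]
        field_simp
        ring
    _ ≤ b ^ (n + 1) / (s * (n + 1)) := by
        gcongr
        exact sub_le_self _ (pow_nonneg (sub_nonneg.2 hsb) _)

theorem le_integral_measureReal_Iic [IsProbabilityMeasure ν] {M : ℝ} (hs : 0 < s) (hb : b ≤ 1)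
    (hM : (1 - b) / s ≤ M) (hF : ∀ t, ν.real (Ici t) = f t ^ n) (hf : ∀ t, 0 ≤ f t)
    (hline : ∀ t ≤ 0, f t ≤ b - s * t) :
    (1 - b) / s - (1 - b ^ (n + 1)) / (s * (n + 1)) ≤ ∫ t in 0..M, ν.real (Iic (-t)) := by
  set T := (1 - b) / s with hT_def
  have hT : 0 ≤ T := div_nonneg (sub_nonneg.2 hb) hs.le
  have hbT : b + s * T = 1 := by rw [hT_def]; field_simp; ring
  have hint : IntervalIntegrable (fun t ↦ ν.real (Iic (-t))) volume 0 M :=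
    Antitone.intervalIntegrable fun _ _ h ↦ measureReal_mono (Iic_subset_Iic.2 (neg_le_neg h))
  calc T - (1 - b ^ (n + 1)) / (s * (n + 1))
      = ∫ t in 0..T, (1 - (b + s * t) ^ n) := by
        rw [integral_sub intervalIntegrable_const (Continuous.intervalIntegrable (by fun_prop) _ _),
          intervalIntegral.integral_const, integral_add_mul_pow _ _ _ hs.ne', hbT, one_pow,
          smul_eq_mul, mul_one, sub_zero]
    _ ≤ ∫ t in 0..T, ν.real (Iic (-t)) := by
        refine integral_mono_on hT (Continuous.intervalIntegrable (by fun_prop) _ _)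
          (hint.mono_set ?_) fun t ht ↦ ?_
        · rw [uIcc_of_le hT, uIcc_of_le (hT.trans hM)]; exact Icc_subset_Icc_right hM
        have hcompl : ν.real (Iic (-t)) = 1 - ν.real (Ioi (-t)) := by
          rw [← compl_Ioi, probReal_compl_eq_one_sub measurableSet_Ioi]
        have hIoi : ν.real (Ioi (-t)) ≤ f (-t) ^ n := hF (-t) ▸ measureReal_mono Ioi_subset_Ici_self
        have hpow : f (-t) ^ n ≤ (b + s * t) ^ n :=
          pow_le_pow_left₀ (hf _) (by linarith [hline (-t) (by linarith [ht.1])]) n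
        linarith
    _ ≤ ∫ t in 0..M, ν.real (Iic (-t)) :=
        integral_mono_interval le_rfl hT hM (ae_of_all _ fun _ ↦ measureReal_nonneg) hint

theorem integral_id_le_of_le_linear [IsProbabilityMeasure ν] {M : ℝ} (hs : 0 < s) (hb : b ≤ 1)
    (h_upper : ν (Ioi 1) = 0) (h_lower : ν (Iio (-M)) = 0) (hM : (1 - b) / s ≤ M)
    (hF : ∀ t, ν.real (Ici t) = f t ^ n) (hf : ∀ t, 0 ≤ f t) (hline : ∀ t < 1, f t ≤ b - s * t) :
    ∫ x, x ∂ν ≤ (1 / (n + 1) - (1 - b)) / s := by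
  rw [integral_id_eq_integral_Ici_sub_integral_Iic zero_le_one
    ((div_nonneg (sub_nonneg.2 hb) hs.le).trans hM) h_upper h_lower]
  calc _ ≤ b ^ (n + 1) / (s * (n + 1)) - ((1 - b) / s - (1 - b ^ (n + 1)) / (s * (n + 1))) :=
        sub_le_sub (integral_measureReal_Ici_le hs hF hf hline)
          (le_integral_measureReal_Iic hs hb hM hF hf fun t ht ↦ hline t (by linarith))
    _ = (1 / (n + 1) - (1 - b)) / s := by field_simp; ring

end TailBounds

theorem concave_tail_value_at_zero_general
    (n : ℕ) (hn : 1 ≤ n)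
    (ν : Measure ℝ) [IsProbabilityMeasure ν]
    (h_upper : ν (Set.Ioi (1 : ℝ)) = 0)
    (h_lower : ∃ a : ℝ, ν (Set.Iio a) = 0)
    (hbar : ∫ x, x ∂ν = 0)
    (hconc : ConcaveOn ℝ (Set.Iio (1 : ℝ))
      (fun lam => (ν (Set.Ici lam)).toReal ^ (1 / (n : ℝ)))) :
    (n : ℝ) / ((n : ℝ) + 1) ≤ (ν (Set.Ici (0 : ℝ))).toReal ^ (1 / (n : ℝ)) := by
  set f : ℝ → ℝ := fun lam ↦ (ν (Ici lam)).toReal ^ (1 / (n : ℝ))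
  have hF : ∀ t, ν.real (Ici t) = f t ^ n := fun t ↦ by
    simp only [f, one_div]
    exact (Real.rpow_inv_natCast_pow measureReal_nonneg (by omega)).symm
  have hf : ∀ t, 0 ≤ f t := fun t ↦ Real.rpow_nonneg measureReal_nonneg _
  have hn' : (n : ℝ) / (n + 1) = 1 - 1 / (n + 1) := by field_simp; ring
  change (n : ℝ) / (n + 1) ≤ f 0
  have hb : f 0 ≤ 1 := Real.rpow_le_one measureReal_nonneg measureReal_le_one (by positivity)
  rcases hb.eq_or_lt with hb | hb
  · rw [hn', hb]
    linarith [show (0 : ℝ) ≤ 1 / (n + 1) by positivity]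
  obtain ⟨a, ha⟩ := h_lower
  set M := max (-a) 1
  have hM : ν (Iio (-M)) = 0 := measure_mono_null (Iio_subset_Iio (neg_le.2 (le_max_left _ _))) ha
  have hfM : f (-M) = 1 := by
    simp only [f]
    rw [show ν (Ici (-M)) = 1 by rwa [← prob_compl_eq_zero_iff measurableSet_Ici, compl_Ici]]
    simp
  set s := -derivWithin f (Ioi 0) 0
  have hline : ∀ t < 1, f t ≤ f 0 - s * t := fun t ht ↦ by
    simpa [s] using hconc.le_add_rightDeriv_mul_sub (x := 0) (by simp) ht
  have hsM : 1 - f 0 ≤ s * M := by linarith [hline (-M) (by linarith [le_max_right (-a) 1])]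
  have hs : 0 < s := pos_of_mul_pos_left (by linarith) (by positivity : (0 : ℝ) ≤ M)
  have hmean :=
    integral_id_le_of_le_linear hs hb.le h_upper hM ((div_le_iff₀' hs).2 hsM) hF hf hline
  rw [hbar, le_div_iff₀ hs, zero_mul] at hmean
  linarith

/-- Let `ν` be a compactly supported probability measure on `ℝ` with
`∫ λ dν = 0` and `max (supp ν) = 1` (encoded by: no mass above `1`, positive mass on
every `(1 − ε, ∞)`, support bounded below), and suppose `f(λ) := ν[λ,∞)^{1/n}` is
concave on `(−∞, 1)` for some `n ≥ 1`.  Then `f(0) ≥ n/(n+1)`. -/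
theorem concave_tail_value_at_zero
    (n : ℕ) (hn : 1 ≤ n)
    (ν : Measure ℝ) [IsProbabilityMeasure ν]
    (h_upper : ν (Set.Ioi (1 : ℝ)) = 0)
    (h_max : ∀ ε : ℝ, 0 < ε → 0 < ν (Set.Ioi (1 - ε)))
    (h_lower : ∃ a : ℝ, ν (Set.Iio a) = 0)
    (hbar : ∫ x, x ∂ν = 0)
    (hconc : ConcaveOn ℝ (Set.Iio (1 : ℝ))
      (fun lam => (ν (Set.Ici lam)).toReal ^ (1 / (n : ℝ)))) :
    (n : ℝ) / ((n : ℝ) + 1) ≤ (ν (Set.Ici (0 : ℝ))).toReal ^ (1 / (n : ℝ)) :=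
  concave_tail_value_at_zero_general n hn ν h_upper h_lower hbar hconc
end

section
/- Let X be a variety over a field k, and let 𝔟 = Σ_{λ∈ℕ} 𝔟_λ t^λ be a 𝔾_m-invariant ideal sheaf of X × 𝔸¹, with 𝔟_λ ideals on X. Write the integral closure as 𝔟̄ = Σ_λ (𝔟̄)_λ t^λ. Then for every λ the integral closure of 𝔟_λ is contained in (𝔟̄)_λ, and equality holds for λ = 0: (𝔟̄)_0 equals the integral closure of 𝔟_0. -/
/-- The integral closure of an ideal `I` in a commutative ring `R`: the set of `f`
satisfying a monic equation `f^d + a₁ f^{d−1} + ⋯ + a_d = 0` with `a_j ∈ I^j`. -/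
def Ideal.intCl {R : Type*} [CommRing R] (I : Ideal R) : Set R :=
  {f : R | ∃ d : ℕ, 0 < d ∧ ∃ a : ℕ → R,
    (∀ j ∈ Finset.Icc 1 d, a j ∈ I ^ j) ∧
    f ^ d + ∑ j ∈ Finset.Icc 1 d, a j * f ^ (d - j) = 0}

/-- The degree-`i` component `𝔟_i = {a | a·t^i ∈ 𝔟}` of a (`𝔾ₘ`-invariant) ideal `𝔟`
of `A[t]`, as an ideal of `A`. -/
def Ideal.homComp {A : Type*} [CommRing A] (b : Ideal (Polynomial A)) (i : ℕ) :
    Ideal A where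
  carrier := {a : A | Polynomial.C a * Polynomial.X ^ i ∈ b}
  add_mem' := by
    intro a a' ha ha'
    simpa only [Set.mem_setOf_eq, map_add, add_mul] using b.add_mem ha ha'
  zero_mem' := by
    simp only [Set.mem_setOf_eq, map_zero, zero_mul]
    exact b.zero_mem
  smul_mem' := by
    intro c a ha
    have h : Polynomial.C (c * a) * Polynomial.X ^ i =
        Polynomial.C c * (Polynomial.C a * Polynomial.X ^ i) := by
      rw [Polynomial.C_mul, mul_assoc]
    simp only [smul_eq_mul, Set.mem_setOf_eq]
    rw [h]
    exact b.mul_mem_left _ ha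

lemma homComp_pow_mem {A : Type*} [CommRing A] (b : Ideal (Polynomial A)) (i : ℕ) :
    ∀ j : ℕ, ∀ a ∈ (b.homComp i) ^ j,
      Polynomial.C a * Polynomial.X ^ (i * j) ∈ b ^ j := by
  intro j
  induction j with
  | zero => intro a _; simp [Ideal.one_eq_top]
  | succ n ih =>
    intro a ha
    rw [pow_succ] at ha
    refine Submodule.mul_induction_on ha ?_ ?_
    · intro x hx y hy
      have : Polynomial.C (x * y) * Polynomial.X ^ (i * (n + 1)) =
          (Polynomial.C x * Polynomial.X ^ (i * n)) *
          (Polynomial.C y * Polynomial.X ^ i) := by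
        rw [Polynomial.C_mul, Nat.mul_succ, pow_add, mul_mul_mul_comm]
      rw [this, pow_succ]
      exact Ideal.mul_mem_mul (ih x hx) hy
    · intro x y hx hy
      rw [map_add, add_mul]
      exact Ideal.add_mem _ hx hy

lemma constantCoeff_pow_mem {A : Type*} [CommRing A] (b : Ideal (Polynomial A))
    (hhom : ∀ p ∈ b, ∀ i : ℕ, Polynomial.C (p.coeff i) * Polynomial.X ^ i ∈ b) :
    ∀ j : ℕ, ∀ p ∈ b ^ j, Polynomial.constantCoeff p ∈ (b.homComp 0) ^ j := by
  intro j
  induction j with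
  | zero => intro p _; simp [Ideal.one_eq_top]
  | succ n ih =>
    intro p hp
    rw [pow_succ] at hp
    refine Submodule.mul_induction_on hp ?_ ?_
    · intro x hx y hy
      rw [map_mul, pow_succ]
      refine Ideal.mul_mem_mul (ih x hx) ?_
      show Polynomial.C (Polynomial.constantCoeff y) * Polynomial.X ^ 0 ∈ b
      simpa using hhom y hy 0
    · intro x y hx hy
      rw [map_add]
      exact Ideal.add_mem _ hx hy

/-- Let `X = Spec A` be a (affine chart of a) variety over a field `k`
and `𝔟 = Σ_{λ∈ℕ} 𝔟_λ t^λ` a `𝔾ₘ`-invariant (i.e. homogeneous) ideal of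
`X × 𝔸¹ = Spec A[t]`, with components `𝔟_λ = {a | a t^λ ∈ 𝔟}`.  Writing
`𝔟̄` for the integral closure and `(𝔟̄)_λ = {a | a t^λ ∈ 𝔟̄}`, for every `λ` the
integral closure of `𝔟_λ` is contained in `(𝔟̄)_λ`, and equality holds for `λ = 0`. -/
theorem invariant_ideal_integral_closure_components
    {k A : Type*} [Field k] [CommRing A] [IsDomain A] [Algebra k A]
    [Algebra.FiniteType k A]
    (b : Ideal (Polynomial A))
    (hhom : ∀ p ∈ b, ∀ i : ℕ, Polynomial.C (p.coeff i) * Polynomial.X ^ i ∈ b) :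
    (∀ i : ℕ, (b.homComp i).intCl ⊆
      {a : A | Polynomial.C a * Polynomial.X ^ i ∈ b.intCl}) ∧
    {a : A | Polynomial.C a * Polynomial.X ^ 0 ∈ b.intCl} = (b.homComp 0).intCl := by
  have fwd : ∀ i : ℕ, (b.homComp i).intCl ⊆
      {a : A | Polynomial.C a * Polynomial.X ^ i ∈ b.intCl} := by
    intro i a ha
    obtain ⟨d, hd, c, hc, heq⟩ := ha
    refine ⟨d, hd, fun j => Polynomial.C (c j) * Polynomial.X ^ (i * j), ?_, ?_⟩
    · intro j hj
      exact homComp_pow_mem b i j (c j) (hc j hj)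
    · have key : (Polynomial.C a * Polynomial.X ^ i) ^ d +
          ∑ j ∈ Finset.Icc 1 d, (Polynomial.C (c j) * Polynomial.X ^ (i * j)) *
            (Polynomial.C a * Polynomial.X ^ i) ^ (d - j) =
          Polynomial.C (a ^ d + ∑ j ∈ Finset.Icc 1 d, c j * a ^ (d - j)) *
            Polynomial.X ^ (i * d) := by
        rw [map_add, map_sum, add_mul, Finset.sum_mul]
        congr 1
        · rw [mul_pow, ← Polynomial.C_pow, ← pow_mul, Nat.mul_comm]
        · refine Finset.sum_congr rfl fun j hj => ?_
          have hjd : j ≤ d := (Finset.mem_Icc.mp hj).2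
          rw [Polynomial.C_mul, mul_pow, ← Polynomial.C_pow, ← pow_mul]
          have : i * j + i * (d - j) = i * d := by rw [← Nat.mul_add, Nat.add_sub_cancel' hjd]
          rw [mul_mul_mul_comm, ← pow_add, this]
      rw [key, heq, map_zero, zero_mul]
  refine ⟨fwd, le_antisymm ?_ (fwd 0)⟩
  intro a ha
  obtain ⟨d, hd, p, hp, heq⟩ := ha
  refine ⟨d, hd, fun j => Polynomial.constantCoeff (p j), ?_, ?_⟩
  · intro j hj
    exact constantCoeff_pow_mem b hhom j (p j) (hp j hj)
  · have := congrArg Polynomial.constantCoeff heq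
    simpa [map_add, map_sum, map_mul, map_pow] using this
end
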